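/- arXiv:1810.13214 — 5 statements merged into one kernel-verified Lean document; each statement's English description precedes it below -/
import Mathlib

section
/- For every real s > 1 there exists a constant c > 0 (depending only on s) such that for all real t > 1 one has Q_{s−1}(t) ≥ c · t^(−s) · log((t+1)/(t−1)). -/
open MeasureTheory

/-- The Legendre function of the second kind `Q_{s−1}(t)`, defined for `s > 1`, `t > 1` by
`Q_{s−1}(t) := ∫₀^∞ (t + √(t²−1)·cosh v)^(−s) dv`. -/
noncomputable def legendreQ (s t : ℝ) : ℝ :=
  ∫ v in Set.Ioi (0 : ℝ), (t + Real.sqrt (t ^ 2 - 1) * Real.cosh v) ^ (-s)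

/-!
On `0 < v ≤ V := ½ log((t+1)/(t−1))` we have `√(t²−1) cosh v ≤ √(t²−1) e^V = t + 1`, so the
integrand is at least `(3t)^(−s)` there. Restricting the (nonnegative, integrable) integral to
`(0, V]` gives `Q_{s−1}(t) ≥ (3t)^(−s) V = (3^(−s)/2) t^(−s) log((t+1)/(t−1))`.
-/

open Set Real

lemma exp_le_two_mul_cosh (v : ℝ) : exp v ≤ 2 * cosh v := by
  rw [cosh_eq]
  linarith [exp_pos (-v)]

lemma cosh_le_exp_of_nonneg {v : ℝ} (hv : 0 ≤ v) : cosh v ≤ exp v := by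
  rw [cosh_eq]
  linarith [exp_le_exp.2 (neg_le_self hv)]

lemma integrableOn_Ioi_add_mul_cosh_rpow_neg {t a s : ℝ} (ht : 0 ≤ t) (ha : 0 < a) (hs : 0 < s) :
    IntegrableOn (fun v => (t + a * cosh v) ^ (-s)) (Ioi 0) := by
  have hbase : ∀ v, 0 < t + a * cosh v := fun v => by positivity
  have hcont : Continuous fun v => (t + a * cosh v) ^ (-s) :=
    (continuous_const.add (continuous_const.mul continuous_cosh)).rpow_const
      fun v => Or.inl (hbase v).ne'
  refine Integrable.mono' ((exp_neg_integrableOn_Ioi 0 hs).const_mul ((a / 2) ^ (-s)))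
    hcont.aestronglyMeasurable (Filter.Eventually.of_forall fun v => ?_)
  rw [norm_of_nonneg (rpow_nonneg (hbase v).le _)]
  have hdom : a / 2 * exp v ≤ t + a * cosh v := by
    nlinarith [mul_le_mul_of_nonneg_left (exp_le_two_mul_cosh v) ha.le]
  calc (t + a * cosh v) ^ (-s)
      ≤ (a / 2 * exp v) ^ (-s) := rpow_le_rpow_of_nonpos (by positivity) hdom (by linarith)
    _ = (a / 2) ^ (-s) * exp (-s * v) := by
      rw [mul_rpow (by positivity) (exp_pos v).le, ← exp_mul, mul_comm v]

lemma mul_sub_le_integral_Ioi_of_le_on_Ioc {f : ℝ → ℝ} {a b c : ℝ} (hab : a ≤ b)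
    (hf : IntegrableOn f (Ioi a)) (hf0 : ∀ v ∈ Ioi a, 0 ≤ f v) (hc : ∀ v ∈ Ioc a b, c ≤ f v) :
    c * (b - a) ≤ ∫ v in Ioi a, f v :=
  calc c * (b - a) = c * volume.real (Ioc a b) := by
        rw [Real.volume_real_Ioc_of_le hab]
    _ ≤ ∫ v in Ioc a b, f v :=
        setIntegral_ge_of_const_le_real measurableSet_Ioc (by simp) hc
          (hf.mono_set Ioc_subset_Ioi_self)
    _ ≤ ∫ v in Ioi a, f v :=
        setIntegral_mono_set hf (ae_restrict_of_forall_mem measurableSet_Ioi hf0)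
          Ioc_subset_Ioi_self.eventuallyLE

lemma sqrt_sq_sub_one_mul_exp_half_log {t : ℝ} (ht : 1 < t) :
    √(t ^ 2 - 1) * exp (log ((t + 1) / (t - 1)) / 2) = t + 1 := by
  have htm : 0 < t - 1 := by linarith
  rw [exp_half, exp_log (by positivity), ← sqrt_mul (by nlinarith),
    show (t ^ 2 - 1) * ((t + 1) / (t - 1)) = (t + 1) ^ 2 by field_simp; ring,
    sqrt_sq (by linarith)]

lemma add_sqrt_mul_cosh_le_three_mul {t v : ℝ} (ht : 1 < t)
    (hv : v ∈ Ioc 0 (log ((t + 1) / (t - 1)) / 2)) :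
    t + √(t ^ 2 - 1) * cosh v ≤ 3 * t := by
  have hcosh : cosh v ≤ exp (log ((t + 1) / (t - 1)) / 2) :=
    (cosh_le_exp_of_nonneg hv.1.le).trans (exp_le_exp.2 hv.2)
  have := mul_le_mul_of_nonneg_left hcosh (sqrt_nonneg (t ^ 2 - 1))
  rw [sqrt_sq_sub_one_mul_exp_half_log ht] at this
  linarith

/-- For every real `s > 1` there exists a constant `c > 0` (depending only
on `s`) such that for all real `t > 1` one has
`Q_{s−1}(t) ≥ c · t^(−s) · log((t+1)/(t−1))`. -/
theorem legendreQ_lower_bound (s : ℝ) (hs : 1 < s) :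
    ∃ c : ℝ, 0 < c ∧ ∀ t : ℝ, 1 < t →
      c * t ^ (-s) * Real.log ((t + 1) / (t - 1)) ≤ legendreQ s t := by
  refine ⟨3 ^ (-s) / 2, by positivity, fun t ht => ?_⟩
  set V := log ((t + 1) / (t - 1)) / 2
  have hV : 0 ≤ V :=
    div_nonneg (log_nonneg (by rw [le_div_iff₀ (by linarith)]; linarith)) zero_le_two
  have hbase : ∀ v, 0 < t + √(t ^ 2 - 1) * cosh v := fun v =>
    add_pos_of_pos_of_nonneg (by linarith) (mul_nonneg (sqrt_nonneg _) (cosh_pos v).le)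
  have hlower : ∀ v ∈ Ioc 0 V, (3 * t) ^ (-s) ≤ (t + √(t ^ 2 - 1) * cosh v) ^ (-s) :=
    fun v hv => rpow_le_rpow_of_nonpos (hbase v) (add_sqrt_mul_cosh_le_three_mul ht hv)
      (by linarith)
  calc 3 ^ (-s) / 2 * t ^ (-s) * log ((t + 1) / (t - 1)) = (3 * t) ^ (-s) * (V - 0) := by
        rw [mul_rpow (by norm_num) (by linarith)]
        ring
    _ ≤ legendreQ s t :=
        mul_sub_le_integral_Ioi_of_le_on_Ioc hV
          (integrableOn_Ioi_add_mul_cosh_rpow_neg (by linarith)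
            (sqrt_pos.2 (by nlinarith)) (by linarith))
          (fun v _ => rpow_nonneg (hbase v).le _) hlower
end

section
/- For every real s > 1, the function Q(t) := Q_{s−1}(t) is twice differentiable on (1, ∞) and satisfies the Legendre differential equation there: for all t > 1, (1 − t²)·Q''(t) − 2t·Q'(t) + s·(s−1)·Q(t) = 0. -/
/-!
Write `u = t + √(t² - 1) cosh v`, so that `Q(t) = ∫₀^∞ u^(-s) dv`. Since `u` is increasing in `t`
and `u ≥ √(t² - 1) eᵛ / 2`, the first two `t`-derivatives of `u^(-s)` are bounded, for `t` in a
compact subinterval `[a, b]` of `(1, ∞)`, by a constant multiple of the integrable function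
`(a + √(a² - 1) cosh v)^(-s)`; so `Q` may be differentiated twice under the integral sign.
The Legendre operator applied to the integrand is an exact `v`-derivative:
`(1 - t²) ∂ₜ² u^(-s) - 2t ∂ₜ u^(-s) + s(s - 1) u^(-s) = ∂ᵥ (s sinh v · u^(-s-1) / √(t² - 1))`,
and the right-hand primitive vanishes at `v = 0` and as `v → ∞`.
-/

open MeasureTheory

namespace LegendreQ

open Real Set Filter Topology

noncomputable def base (t v : ℝ) : ℝ := t + √(t ^ 2 - 1) * cosh v

noncomputable def baseDeriv (t v : ℝ) : ℝ := 1 + t / √(t ^ 2 - 1) * cosh v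

noncomputable def kernelDeriv (s t v : ℝ) : ℝ :=
  -s * (baseDeriv t v / base t v) * base t v ^ (-s)

noncomputable def kernelDeriv2 (s t v : ℝ) : ℝ :=
  s * ((s + 1) * (baseDeriv t v / base t v) ^ 2 + cosh v / (√(t ^ 2 - 1) ^ 3 * base t v))
    * base t v ^ (-s)

noncomputable def flux (s t v : ℝ) : ℝ :=
  s / √(t ^ 2 - 1) * (sinh v / base t v) * base t v ^ (-s)

variable {s t a b v : ℝ}

lemma sqrt_sq_sub_one_pos (ht : 1 < t) : 0 < √(t ^ 2 - 1) :=
  Real.sqrt_pos.2 (by nlinarith)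

lemma sq_sqrt_sq_sub_one (ht : 1 ≤ t) : √(t ^ 2 - 1) ^ 2 = t ^ 2 - 1 :=
  Real.sq_sqrt (by nlinarith)

lemma sqrt_mul_cosh_le_base (ht : 0 ≤ t) (v : ℝ) : √(t ^ 2 - 1) * cosh v ≤ base t v :=
  le_add_of_nonneg_left ht

lemma base_pos (ht : 0 < t) (v : ℝ) : 0 < base t v :=
  add_pos_of_pos_of_nonneg ht (by positivity)

lemma half_mul_exp_le_base (ht : 0 ≤ t) (v : ℝ) : √(t ^ 2 - 1) / 2 * exp v ≤ base t v := by
  have : exp v / 2 ≤ cosh v := by rw [cosh_eq]; linarith [exp_pos (-v)]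
  calc √(t ^ 2 - 1) / 2 * exp v ≤ √(t ^ 2 - 1) * cosh v := by
        rw [div_mul_eq_mul_div, mul_div_assoc]; gcongr
    _ ≤ base t v := sqrt_mul_cosh_le_base ht v

lemma base_mono (ha : 0 ≤ a) (hat : a ≤ t) (v : ℝ) : base a v ≤ base t v := by
  unfold base
  gcongr

lemma tendsto_base_atTop (ht : 1 < t) : Tendsto (base t) atTop atTop :=
  tendsto_atTop_mono (half_mul_exp_le_base (by linarith))
    (tendsto_exp_atTop.const_mul_atTop (by linarith [sqrt_sq_sub_one_pos ht]))

lemma hasDerivAt_sqrt_sq_sub_one (ht : 1 < t) :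
    HasDerivAt (fun t => √(t ^ 2 - 1)) (t / √(t ^ 2 - 1)) t := by
  refine (((hasDerivAt_pow 2 t).sub_const 1).sqrt (by nlinarith)).congr_deriv ?_
  field_simp
  ring

lemma hasDerivAt_base (ht : 1 < t) (v : ℝ) : HasDerivAt (base · v) (baseDeriv t v) t :=
  (hasDerivAt_id t).add ((hasDerivAt_sqrt_sq_sub_one ht).mul_const _)

lemma hasDerivAt_baseDeriv (ht : 1 < t) (v : ℝ) :
    HasDerivAt (baseDeriv · v) (-cosh v / √(t ^ 2 - 1) ^ 3) t := by
  have hw := sqrt_sq_sub_one_pos ht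
  refine ((((hasDerivAt_id' t).fun_div (hasDerivAt_sqrt_sq_sub_one ht) hw.ne').mul_const
    (cosh v)).const_add 1).congr_deriv ?_
  field_simp
  linear_combination sq_sqrt_sq_sub_one ht.le

lemma hasDerivAt_kernel (ht : 1 < t) (v : ℝ) :
    HasDerivAt (fun t => base t v ^ (-s)) (kernelDeriv s t v) t := by
  have hu := base_pos (by linarith) v (t := t)
  refine ((hasDerivAt_base ht v).rpow_const (p := -s) (Or.inl hu.ne')).congr_deriv ?_
  rw [kernelDeriv, rpow_sub_one hu.ne']
  ring

lemma hasDerivAt_kernelDeriv (ht : 1 < t) (v : ℝ) :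
    HasDerivAt (kernelDeriv s · v) (kernelDeriv2 s t v) t := by
  have hu := base_pos (by linarith) v (t := t)
  refine ((((hasDerivAt_baseDeriv ht v).fun_div (hasDerivAt_base ht v) hu.ne').const_mul
    (-s)).fun_mul (hasDerivAt_kernel ht v (s := s))).congr_deriv ?_
  simp only [kernelDeriv2, kernelDeriv]
  field_simp
  ring

lemma hasDerivAt_flux (ht : 1 < t) (v : ℝ) :
    HasDerivAt (flux s t) ((1 - t ^ 2) * kernelDeriv2 s t v - 2 * t * kernelDeriv s t v
      + s * (s - 1) * base t v ^ (-s)) v := by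
  have hu := base_pos (by linarith) v (t := t)
  have hw := sqrt_sq_sub_one_pos ht
  have hbase : HasDerivAt (base t) (√(t ^ 2 - 1) * sinh v) v :=
    ((hasDerivAt_cosh v).const_mul _).const_add t
  refine ((((hasDerivAt_sinh v).fun_div hbase hu.ne').const_mul (s / √(t ^ 2 - 1))).fun_mul
    (hbase.rpow_const (p := -s) (Or.inl hu.ne'))).congr_deriv ?_
  simp only [kernelDeriv2, kernelDeriv, baseDeriv, rpow_sub_one hu.ne']
  field_simp
  unfold base
  linear_combination (-s * √(t ^ 2 - 1) ^ 3 - s ^ 2 * √(t ^ 2 - 1) ^ 3) * sinh_sq v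
    + (-s * √(t ^ 2 - 1) * cosh v ^ 2 + s * √(t ^ 2 - 1) ^ 3 * cosh v ^ 2 - s * t * cosh v
      - s * t ^ 2 * √(t ^ 2 - 1) * cosh v ^ 2 - s ^ 2 * √(t ^ 2 - 1) ^ 3 * cosh v ^ 2
      - 2 * s ^ 2 * t * √(t ^ 2 - 1) ^ 2 * cosh v - s ^ 2 * t ^ 2 * √(t ^ 2 - 1) * cosh v ^ 2)
      * sq_sqrt_sq_sub_one ht.le

lemma abs_sinh_le_cosh (v : ℝ) : |sinh v| ≤ cosh v := by
  rw [abs_sinh, ← cosh_abs]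
  exact (sinh_lt_cosh _).le

lemma abs_sinh_div_base_le (ht : 1 < t) (v : ℝ) : |sinh v / base t v| ≤ 1 / √(t ^ 2 - 1) := by
  have hu := base_pos (by linarith) v (t := t)
  rw [abs_div, abs_of_pos hu, div_le_div_iff₀ hu (sqrt_sq_sub_one_pos ht)]
  calc |sinh v| * √(t ^ 2 - 1) ≤ cosh v * √(t ^ 2 - 1) := by gcongr; exact abs_sinh_le_cosh v
    _ ≤ 1 * base t v := by rw [one_mul, mul_comm]; exact sqrt_mul_cosh_le_base (by linarith) v

lemma tendsto_flux_atTop (hs : 0 < s) (ht : 1 < t) : Tendsto (flux s t) atTop (𝓝 0) := by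
  have h := ((tendsto_rpow_neg_atTop hs).comp (tendsto_base_atTop ht)).const_mul
    (s / √(t ^ 2 - 1) * (1 / √(t ^ 2 - 1)))
  rw [mul_zero] at h
  refine squeeze_zero_norm (fun v => ?_) h
  have hW := sqrt_sq_sub_one_pos ht
  rw [flux, Real.norm_eq_abs, abs_mul, abs_mul, abs_of_pos (by positivity : 0 < s / √(t ^ 2 - 1)),
    abs_of_nonneg (rpow_nonneg (base_pos (by linarith) v).le _)]
  exact mul_le_mul_of_nonneg_right
    (mul_le_mul_of_nonneg_left (abs_sinh_div_base_le ht v) (by positivity))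
    (rpow_nonneg (base_pos (by linarith) v).le _)

lemma baseDeriv_div_base_le (ha : 1 < a) (hat : a ≤ t) (htb : t ≤ b) (v : ℝ) :
    baseDeriv t v / base t v ≤ 1 + b / (a ^ 2 - 1) := by
  have ht : 1 < t := ha.trans_le hat
  have hu := base_pos (by linarith) v (t := t)
  have hW := sqrt_sq_sub_one_pos ht
  have hA : 0 < a ^ 2 - 1 := by nlinarith
  have hcosh := sqrt_mul_cosh_le_base (t := t) (by linarith) v
  have hslope : t / √(t ^ 2 - 1) ^ 2 ≤ b / (a ^ 2 - 1) := by
    rw [sq_sqrt_sq_sub_one ht.le]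
    gcongr
    nlinarith
  have hterm : t / √(t ^ 2 - 1) * cosh v ≤ b / (a ^ 2 - 1) * base t v :=
    calc t / √(t ^ 2 - 1) * cosh v = t / √(t ^ 2 - 1) ^ 2 * (√(t ^ 2 - 1) * cosh v) := by
          field_simp
      _ ≤ b / (a ^ 2 - 1) * base t v := by
          gcongr
          exact div_nonneg (by linarith) hA.le
  have hone : 1 ≤ base t v := le_add_of_le_of_nonneg ht.le (by positivity)
  rw [div_le_iff₀ hu, baseDeriv]
  linarith

lemma cosh_div_mul_base_le (ha : 1 < a) (hat : a ≤ t) (v : ℝ) :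
    cosh v / (√(t ^ 2 - 1) ^ 3 * base t v) ≤ 1 / (a ^ 2 - 1) ^ 2 := by
  have ht : 1 < t := ha.trans_le hat
  have hu := base_pos (by linarith) v (t := t)
  have hW := sqrt_sq_sub_one_pos ht
  have hA : 0 < a ^ 2 - 1 := by nlinarith
  rw [div_le_div_iff₀ (by positivity) (by positivity)]
  calc cosh v * (a ^ 2 - 1) ^ 2 ≤ cosh v * (√(t ^ 2 - 1) ^ 2) ^ 2 := by
        rw [sq_sqrt_sq_sub_one ht.le]
        gcongr
    _ = √(t ^ 2 - 1) ^ 3 * (√(t ^ 2 - 1) * cosh v) := by ring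
    _ ≤ 1 * (√(t ^ 2 - 1) ^ 3 * base t v) := by
        rw [one_mul]
        gcongr
        exact sqrt_mul_cosh_le_base (by linarith) v

lemma rpow_neg_base_le (hs : 0 ≤ s) (ha : 0 < a) (hat : a ≤ t) (v : ℝ) :
    base t v ^ (-s) ≤ base a v ^ (-s) :=
  rpow_le_rpow_of_nonpos (base_pos ha v) (base_mono ha.le hat v) (neg_nonpos.2 hs)

lemma baseDeriv_div_base_nonneg (ht : 1 < t) (v : ℝ) : 0 ≤ baseDeriv t v / base t v := by
  have := sqrt_sq_sub_one_pos ht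
  have := base_pos (by linarith) v (t := t)
  unfold baseDeriv
  positivity

lemma abs_kernelDeriv_le (hs : 0 ≤ s) (ha : 1 < a) (hat : a ≤ t) (htb : t ≤ b) (v : ℝ) :
    |kernelDeriv s t v| ≤ s * (1 + b / (a ^ 2 - 1)) * base a v ^ (-s) := by
  have ht : 1 < t := ha.trans_le hat
  have hq := baseDeriv_div_base_nonneg ht v
  have hu := rpow_nonneg (base_pos (by linarith) v (t := t)).le (-s)
  rw [kernelDeriv, neg_mul, neg_mul, abs_neg, abs_of_nonneg (by positivity)]
  have hM := baseDeriv_div_base_le ha hat htb v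
  exact mul_le_mul (mul_le_mul_of_nonneg_left hM hs) (rpow_neg_base_le hs (by linarith) hat v) hu
    (mul_nonneg hs (hq.trans hM))

lemma abs_kernelDeriv2_le (hs : 0 ≤ s) (ha : 1 < a) (hat : a ≤ t) (htb : t ≤ b) (v : ℝ) :
    |kernelDeriv2 s t v|
      ≤ s * ((s + 1) * (1 + b / (a ^ 2 - 1)) ^ 2 + 1 / (a ^ 2 - 1) ^ 2) * base a v ^ (-s) := by
  have ht : 1 < t := ha.trans_le hat
  have hq := baseDeriv_div_base_nonneg ht v
  have hW := sqrt_sq_sub_one_pos ht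
  have hu := base_pos (by linarith) v (t := t)
  have hup := rpow_nonneg hu.le (-s)
  rw [kernelDeriv2, abs_of_nonneg (by positivity)]
  gcongr s * ((s + 1) * ?_ ^ 2 + ?_) * ?_
  · exact baseDeriv_div_base_le ha hat htb v
  · exact cosh_div_mul_base_le ha hat v
  · exact rpow_neg_base_le hs (by linarith) hat v

lemma integrableOn_rpow_neg_base (hs : 0 < s) (ht : 1 < t) :
    IntegrableOn (fun v => base t v ^ (-s)) (Ioi 0) := by
  have hW := sqrt_sq_sub_one_pos ht
  refine ((exp_neg_integrableOn_Ioi 0 hs).const_mul ((√(t ^ 2 - 1) / 2) ^ (-s))).mono'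
    (by unfold base; fun_prop : Measurable _).aestronglyMeasurable (ae_of_all _ fun v => ?_)
  rw [Real.norm_eq_abs, abs_of_nonneg (rpow_nonneg (base_pos (by linarith) v).le _)]
  calc base t v ^ (-s) ≤ (√(t ^ 2 - 1) / 2 * exp v) ^ (-s) :=
        rpow_le_rpow_of_nonpos (by positivity) (half_mul_exp_le_base (by linarith) v) (by linarith)
    _ = (√(t ^ 2 - 1) / 2) ^ (-s) * exp (-s * v) := by
        rw [mul_rpow (by positivity) (exp_pos v).le, ← exp_mul, mul_comm v]

lemma hasDerivAt_integral_of_le_rpow_neg_base {F F' : ℝ → ℝ → ℝ} {C : ℝ} (hs : 0 < s)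
    (ha : 1 < a) (ht : t ∈ Ioo a b) (hF_meas : ∀ x, Measurable (F x))
    (hF'_meas : Measurable (F' t)) (hF_int : IntegrableOn (F t) (Ioi 0))
    (h_diff : ∀ x ∈ Icc a b, ∀ v, HasDerivAt (F · v) (F' x v) x)
    (h_bound : ∀ x ∈ Icc a b, ∀ v, |F' x v| ≤ C * base a v ^ (-s)) :
    IntegrableOn (F' t) (Ioi 0) ∧
      HasDerivAt (fun x => ∫ v in Ioi 0, F x v) (∫ v in Ioi 0, F' t v) t :=
  hasDerivAt_integral_of_dominated_loc_of_deriv_le (Icc_mem_nhds ht.1 ht.2)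
    (Eventually.of_forall fun x => (hF_meas x).aestronglyMeasurable) hF_int
    hF'_meas.aestronglyMeasurable (ae_of_all _ fun v x hx => h_bound x hx v)
    ((integrableOn_rpow_neg_base hs ha).const_mul C) (ae_of_all _ fun v x hx => h_diff x hx v)

lemma hasDerivAt_legendreQ (hs : 0 < s) (ht : 1 < t) :
    IntegrableOn (kernelDeriv s t) (Ioi 0) ∧
      HasDerivAt (legendreQ s) (∫ v in Ioi 0, kernelDeriv s t v) t := by
  have ha : 1 < (1 + t) / 2 := by linarith
  exact hasDerivAt_integral_of_le_rpow_neg_base (F := fun x v => base x v ^ (-s)) hs ha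
    ⟨by linarith, lt_add_one t⟩ (fun x => by unfold base; fun_prop)
    (by unfold kernelDeriv baseDeriv base; fun_prop)
    (integrableOn_rpow_neg_base hs ht) (fun x hx v => hasDerivAt_kernel (ha.trans_le hx.1) v)
    (fun x hx v => abs_kernelDeriv_le hs.le ha hx.1 hx.2 v)

lemma hasDerivAt_integral_kernelDeriv (hs : 0 < s) (ht : 1 < t) :
    IntegrableOn (kernelDeriv2 s t) (Ioi 0) ∧
      HasDerivAt (fun x => ∫ v in Ioi 0, kernelDeriv s x v)
        (∫ v in Ioi 0, kernelDeriv2 s t v) t := by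
  have ha : 1 < (1 + t) / 2 := by linarith
  exact hasDerivAt_integral_of_le_rpow_neg_base hs ha ⟨by linarith, lt_add_one t⟩
    (fun x => by unfold kernelDeriv baseDeriv base; fun_prop)
    (by unfold kernelDeriv2 baseDeriv base; fun_prop)
    (hasDerivAt_legendreQ hs ht).1 (fun x hx v => hasDerivAt_kernelDeriv (ha.trans_le hx.1) v)
    (fun x hx v => abs_kernelDeriv2_le hs.le ha hx.1 hx.2 v)

lemma integral_legendre_operator_eq_zero (hs : 0 < s) (ht : 1 < t) :
    (1 - t ^ 2) * (∫ v in Ioi 0, kernelDeriv2 s t v) - 2 * t * (∫ v in Ioi 0, kernelDeriv s t v)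
      + s * (s - 1) * legendreQ s t = 0 := by
  have h0 := integrableOn_rpow_neg_base hs ht
  have h1 := (hasDerivAt_legendreQ hs ht).1
  have h2 := (hasDerivAt_integral_kernelDeriv hs ht).1
  have h := integral_Ioi_of_hasDerivAt_of_tendsto' (fun v _ => hasDerivAt_flux ht v)
    (((h2.const_mul _).sub (h1.const_mul _)).add (h0.const_mul _)) (tendsto_flux_atTop hs ht)
  rw [integral_add (f := fun v => (1 - t ^ 2) * kernelDeriv2 s t v - 2 * t * kernelDeriv s t v)
      ((h2.const_mul _).sub (h1.const_mul _)) (h0.const_mul _),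
    integral_sub (h2.const_mul _) (h1.const_mul _), integral_const_mul, integral_const_mul,
    integral_const_mul, flux, sinh_zero, zero_div, mul_zero, zero_mul, sub_zero] at h
  exact h

lemma deriv_legendreQ_eventuallyEq (hs : 0 < s) (ht : 1 < t) :
    deriv (legendreQ s) =ᶠ[𝓝 t] fun x => ∫ v in Ioi 0, kernelDeriv s x v := by
  filter_upwards [Ioi_mem_nhds ht] with x hx
  exact (hasDerivAt_legendreQ hs hx).2.deriv

lemma hasDerivAt_deriv_legendreQ (hs : 0 < s) (ht : 1 < t) :
    HasDerivAt (deriv (legendreQ s)) (∫ v in Ioi 0, kernelDeriv2 s t v) t :=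
  (hasDerivAt_integral_kernelDeriv hs ht).2.congr_of_eventuallyEq
    (deriv_legendreQ_eventuallyEq hs ht)

end LegendreQ

open LegendreQ in
/-- For every real `s > 1`, the function `Q(t) := Q_{s−1}(t)` is twice
differentiable on `(1, ∞)` and satisfies the Legendre differential equation there:
for all `t > 1`, `(1 − t²)·Q''(t) − 2t·Q'(t) + s·(s−1)·Q(t) = 0`. -/
theorem legendreQ_ODE (s : ℝ) (hs : 1 < s) :
    ∀ t : ℝ, 1 < t →
      DifferentiableAt ℝ (legendreQ s) t ∧
      DifferentiableAt ℝ (deriv (legendreQ s)) t ∧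
      (1 - t ^ 2) * deriv (deriv (legendreQ s)) t - 2 * t * deriv (legendreQ s) t
        + s * (s - 1) * legendreQ s t = 0 := by
  intro t ht
  have hs₀ : 0 < s := by linarith
  have hQ' := (hasDerivAt_legendreQ hs₀ ht).2
  have hQ'' := hasDerivAt_deriv_legendreQ hs₀ ht
  refine ⟨hQ'.differentiableAt, hQ''.differentiableAt, ?_⟩
  rw [hQ''.deriv, hQ'.deriv]
  exact integral_legendre_operator_eq_zero hs₀ ht
end

section
/- The minimum of the Legendre polynomial P₂(r) = (3r² − 1)/2 over the interval [−1, 1] equals −1/2; the minimum of P₄(r) = (35r⁴ − 30r² + 3)/8 over [−1, 1] equals −3/7; and the minimum of P₆(r) = (231r⁶ − 315r⁴ + 105r² − 5)/16 over [−1, 1] equals −(15 + 35√15)/363. Consequently, with m_k := (max_{r∈[−1,1]} (−P_{k−1}(r)))^{−1}, one has m₃ = 2, m₅ = 7/3, and m₇ = (7√15 − 3)/10, so that m₇ > m₅ > m₃. -/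
private lemma hs15 : Real.sqrt 15 ^ 2 = 15 := Real.sq_sqrt (by norm_num)

private lemma hslb : (79 : ℝ) / 21 < Real.sqrt 15 := by
  nlinarith [hs15, Real.sqrt_nonneg 15]

private lemma hsub : Real.sqrt 15 ≤ 4 := by
  nlinarith [hs15, Real.sqrt_nonneg 15]

private lemma least2 :
    IsLeast ((fun r : ℝ => (3 * r ^ 2 - 1) / 2) '' Set.Icc (-1) 1) (-(1 / 2)) := by
  constructor
  · exact ⟨0, by norm_num, by norm_num⟩
  · rintro y ⟨r, -, rfl⟩
    nlinarith [sq_nonneg r]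

private lemma least4 :
    IsLeast ((fun r : ℝ => (35 * r ^ 4 - 30 * r ^ 2 + 3) / 8) '' Set.Icc (-1) 1) (-(3 / 7)) := by
  constructor
  · refine ⟨Real.sqrt (3 / 7), ?_, ?_⟩
    · constructor
      · linarith [Real.sqrt_nonneg (3 / 7 : ℝ)]
      · exact Real.sqrt_le_one.mpr (by norm_num)
    · have h : Real.sqrt (3 / 7) ^ 2 = 3 / 7 := Real.sq_sqrt (by norm_num)
      have h4 : Real.sqrt (3 / 7) ^ 4 = (3 / 7 : ℝ) ^ 2 := by
        rw [show (4 : ℕ) = 2 * 2 by rfl, pow_mul, h]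
      simp only
      rw [h4, h]; norm_num
  · rintro y ⟨r, -, rfl⟩
    nlinarith [sq_nonneg (7 * r ^ 2 - 3)]

private lemma least6 :
    IsLeast ((fun r : ℝ => (231 * r ^ 6 - 315 * r ^ 4 + 105 * r ^ 2 - 5) / 16) ''
      Set.Icc (-1) 1) (-((15 + 35 * Real.sqrt 15) / 363)) := by
  set s := Real.sqrt 15 with hsdef
  have hs : s ^ 2 = 15 := hs15
  have hs0 : 0 ≤ s := Real.sqrt_nonneg 15
  constructor
  · set x : ℝ := (15 + 2 * s) / 33 with hx
    have hx0 : 0 ≤ x := by positivity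
    have hx1 : x ≤ 1 := by rw [hx]; nlinarith [hsub]
    refine ⟨Real.sqrt x, ?_, ?_⟩
    · constructor
      · linarith [Real.sqrt_nonneg x]
      · exact Real.sqrt_le_one.mpr hx1
    · have h2 : Real.sqrt x ^ 2 = x := Real.sq_sqrt hx0
      simp only
      rw [show Real.sqrt x ^ 6 = (Real.sqrt x ^ 2) ^ 3 by ring,
          show Real.sqrt x ^ 4 = (Real.sqrt x ^ 2) ^ 2 by ring, h2, hx]
      linear_combination (7 * s / 2178) * hs
  · rintro y ⟨r, -, rfl⟩
    have h1 : 0 ≤ 33 * r ^ 2 - 15 + 4 * s := by nlinarith [sq_nonneg r, hslb]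
    have h2 : 0 ≤ (33 * r ^ 2 - (15 + 2 * s)) ^ 2 * (33 * r ^ 2 - 15 + 4 * s) :=
      mul_nonneg (sq_nonneg _) h1
    nlinarith [h2, hs, hs0]

private lemma greatest_of_least {f : ℝ → ℝ} {a : ℝ}
    (h : IsLeast (f '' Set.Icc (-1) 1) a) :
    IsGreatest ((fun r => -(f r)) '' Set.Icc (-1) 1) (-a) := by
  obtain ⟨⟨r, hr, hfr⟩, hub⟩ := h
  constructor
  · exact ⟨r, hr, by simp [hfr]⟩
  · rintro y ⟨t, ht, rfl⟩
    simp only [neg_le_neg_iff]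
    exact hub ⟨t, ht, rfl⟩

/-- The minimum of `P₂(r) = (3r² − 1)/2` over `[−1, 1]` equals `−1/2`;
the minimum of `P₄(r) = (35r⁴ − 30r² + 3)/8` over `[−1, 1]` equals `−3/7`; and the minimum
of `P₆(r) = (231r⁶ − 315r⁴ + 105r² − 5)/16` over `[−1, 1]` equals `−(15 + 35√15)/363`.
Consequently, with `m_k := (max_{r ∈ [−1,1]} (−P_{k−1}(r)))⁻¹`, one has `m₃ = 2`,
`m₅ = 7/3` and `m₇ = (7√15 − 3)/10`, so that `m₇ > m₅ > m₃`. -/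
theorem legendre_poly_min_on_Icc :
    IsLeast ((fun r : ℝ => (3 * r ^ 2 - 1) / 2) '' Set.Icc (-1) 1) (-(1 / 2)) ∧
    IsLeast ((fun r : ℝ => (35 * r ^ 4 - 30 * r ^ 2 + 3) / 8) '' Set.Icc (-1) 1) (-(3 / 7)) ∧
    IsLeast ((fun r : ℝ => (231 * r ^ 6 - 315 * r ^ 4 + 105 * r ^ 2 - 5) / 16) ''
        Set.Icc (-1) 1) (-((15 + 35 * Real.sqrt 15) / 363)) ∧
    (sSup ((fun r : ℝ => -((3 * r ^ 2 - 1) / 2)) '' Set.Icc (-1) 1))⁻¹ = 2 ∧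
    (sSup ((fun r : ℝ => -((35 * r ^ 4 - 30 * r ^ 2 + 3) / 8)) '' Set.Icc (-1) 1))⁻¹ = 7 / 3 ∧
    (sSup ((fun r : ℝ => -((231 * r ^ 6 - 315 * r ^ 4 + 105 * r ^ 2 - 5) / 16)) ''
        Set.Icc (-1) 1))⁻¹ = (7 * Real.sqrt 15 - 3) / 10 ∧
    (7 * Real.sqrt 15 - 3) / 10 > 7 / 3 ∧ (7 : ℝ) / 3 > 2 := by
  have g2 := greatest_of_least least2
  have g4 := greatest_of_least least4
  have g6 := greatest_of_least least6
  refine ⟨least2, least4, least6, ?_, ?_, ?_, ?_, by norm_num⟩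
  · rw [g2.csSup_eq]; norm_num
  · rw [g4.csSup_eq]; norm_num
  · rw [g6.csSup_eq, neg_neg]
    have h : (15 + 35 * Real.sqrt 15) / 363 * ((7 * Real.sqrt 15 - 3) / 10) = 1 := by
      field_simp
      linear_combination 245 * hs15
    exact inv_eq_of_mul_eq_one_right h
  · nlinarith [hslb]
end

section
/- Let s > 1 be real and let z₁, z₂ be points of the complex upper half-plane ℍ such that γ·z₂ ≠ z₁ for every γ ∈ SL(2, ℤ) (acting by Möbius transformations). Then the family (Q_{s−1}(cosh d(z₁, γ·z₂)))_{γ ∈ SL(2,ℤ)} is summable, and its sum is strictly positive. (Hence the Poincaré series defining the automorphic Green's function G_s(z₁, z₂) = −2·∑_{γ} Q_{s−1}(cosh d(z₁, γ·z₂)) converges absolutely and G_s(z₁, z₂) < 0 off the diagonal orbit.) -/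
open MeasureTheory UpperHalfPlane

/-!
Bounding the integrand by a multiple of `e^{-sv}` gives `Q_{s-1}(t) = O(t^{-s})` as `t → ∞`, so it
suffices that `∑_γ cosh d(z₁, γz₂)^{-s}` converges. Moving `z₁` and `z₂` to `i` changes `cosh d` by
at most the factor `e^{d(i,z₁) + d(i,z₂)}`, and `2 cosh d(i, γi) ≥ |ci + d|² (1 + x²)` with
`x = Re(γi)`. Two elements of `SL(2, ℤ)` with the same bottom row `(c, d)` differ by a translation
`T^k`, which shifts `x` by `k`; so `γ ↦ ((c, d), ⌊x⌋)` is injective, and the series is dominated by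
an Eisenstein series `∑ |ci + d|^{-2s}` times `∑_n |n + 1/2|^{-2s}`. All terms are nonnegative and
the term `γ = 1` is positive, which gives the sign of the sum.
-/

open Real Set Filter Asymptotics
open scoped MatrixGroups Topology

section LegendreQ

variable {s : ℝ}

lemma rpow_neg_add_mul_cosh_le {a b : ℝ} (hs : 0 ≤ s) (ha : 0 ≤ a) (hb : 0 < b) (v : ℝ) :
    (a + b * cosh v) ^ (-s) ≤ (b / 2) ^ (-s) * exp (-s * v) := by
  have hexp : b / 2 * exp v ≤ a + b * cosh v := by
    have := exp_pos (-v); rw [cosh_eq]; nlinarith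
  calc (a + b * cosh v) ^ (-s) ≤ (b / 2 * exp v) ^ (-s) :=
        rpow_le_rpow_of_nonpos (by positivity) hexp (neg_nonpos.mpr hs)
    _ = (b / 2) ^ (-s) * exp (-s * v) := by
        rw [mul_rpow (by positivity) (exp_pos v).le, ← exp_mul, mul_comm v]

lemma integrableOn_rpow_neg_add_mul_cosh {a b : ℝ} (hs : 0 < s) (ha : 0 ≤ a) (hb : 0 < b) :
    IntegrableOn (fun v => (a + b * cosh v) ^ (-s)) (Ioi 0) := by
  refine ((exp_neg_integrableOn_Ioi 0 hs).const_mul ((b / 2) ^ (-s))).mono'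
    (Measurable.aestronglyMeasurable (by fun_prop)) (ae_of_all _ fun v => ?_)
  rw [norm_of_nonneg (rpow_nonneg (by positivity) _)]
  exact rpow_neg_add_mul_cosh_le hs.le ha hb v

lemma legendreQ_nonneg {t : ℝ} (ht : 0 ≤ t) : 0 ≤ legendreQ s t :=
  integral_nonneg fun v => rpow_nonneg (by positivity) _

lemma legendreQ_pos (hs : 0 < s) {t : ℝ} (ht : 1 < t) : 0 < legendreQ s t := by
  have hsqrt : 0 < √(t ^ 2 - 1) := sqrt_pos.mpr (by nlinarith)
  have hpos : ∀ v, 0 < (t + √(t ^ 2 - 1) * cosh v) ^ (-s) := fun v =>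
    rpow_pos_of_pos (by positivity) _
  rw [legendreQ, setIntegral_pos_iff_support_of_nonneg_ae (ae_of_all _ fun v => (hpos v).le)
    (integrableOn_rpow_neg_add_mul_cosh hs (by linarith) hsqrt),
    Function.support_eq_univ fun v => (hpos v).ne', univ_inter, volume_Ioi]
  exact ENNReal.zero_lt_top

lemma legendreQ_le (hs : 0 < s) {t : ℝ} (ht : 1 < t) :
    legendreQ s t ≤ (√(t ^ 2 - 1) / 2) ^ (-s) / s := by
  have hsqrt : 0 < √(t ^ 2 - 1) := sqrt_pos.mpr (by nlinarith)
  calc legendreQ s t ≤ ∫ v in Ioi 0, (√(t ^ 2 - 1) / 2) ^ (-s) * exp (-s * v) :=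
        setIntegral_mono (integrableOn_rpow_neg_add_mul_cosh hs (by linarith) hsqrt)
          ((exp_neg_integrableOn_Ioi 0 hs).const_mul _)
          fun v => rpow_neg_add_mul_cosh_le hs.le (by linarith) hsqrt v
    _ = (√(t ^ 2 - 1) / 2) ^ (-s) / s := by
        rw [integral_const_mul, integral_exp_mul_Ioi (neg_neg_of_pos hs)]
        field_simp
        simp

lemma isBigO_legendreQ_atTop (hs : 0 < s) : legendreQ s =O[atTop] fun t => t ^ (-s) := by
  refine IsBigO.of_bound (4 ^ s / s) ?_
  filter_upwards [eventually_ge_atTop 2] with t ht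
  have hsqrt : t / 2 ≤ √(t ^ 2 - 1) := le_sqrt_of_sq_le (by nlinarith)
  have ht₀ : 0 ≤ t := by linarith
  rw [norm_of_nonneg (legendreQ_nonneg ht₀), norm_of_nonneg (rpow_nonneg ht₀ _)]
  calc legendreQ s t ≤ (√(t ^ 2 - 1) / 2) ^ (-s) / s := legendreQ_le hs (by linarith)
    _ ≤ (t / 4) ^ (-s) / s := by
        gcongr ?_ / s
        exact rpow_le_rpow_of_nonpos (by positivity) (by linarith) (neg_nonpos.mpr hs.le)
    _ = 4 ^ s / s * t ^ (-s) := by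
        rw [div_rpow (by positivity) (by norm_num), rpow_neg (by norm_num : (0:ℝ) ≤ 4)]
        field_simp

end LegendreQ

lemma Real.cosh_le_exp_abs_sub_mul_cosh (x y : ℝ) : cosh x ≤ exp |x - y| * cosh y := by
  have h₁ : exp x ≤ exp |x - y| * exp y := by
    rw [← exp_add]; exact exp_le_exp.mpr (by linarith [le_abs_self (x - y)])
  have h₂ : exp (-x) ≤ exp |x - y| * exp (-y) := by
    rw [← exp_add]; exact exp_le_exp.mpr (by linarith [neg_abs_le (x - y)])
  rw [cosh_eq, cosh_eq]
  linarith

lemma cosh_dist_le_exp_mul_cosh_dist {X : Type*} [PseudoMetricSpace X] (x y x' y' : X) :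
    cosh (dist x y) ≤ exp (dist x x' + dist y y') * cosh (dist x' y') := by
  refine (cosh_le_exp_abs_sub_mul_cosh _ (dist x' y')).trans ?_
  gcongr
  exact dist_dist_dist_le x y x' y'

lemma tendsto_cofinite_atTop_of_summable_rpow_neg {ι : Type*} {f : ι → ℝ} {s : ℝ} (hs : 0 < s)
    (hf : ∀ i, 0 < f i) (h : Summable fun i => f i ^ (-s)) : Tendsto f cofinite atTop := by
  have h₀ : Tendsto (fun i => f i ^ (-s)) cofinite (𝓝[>] 0) :=
    tendsto_nhdsWithin_iff.mpr
      ⟨h.tendsto_cofinite_zero, Eventually.of_forall fun i => rpow_pos_of_pos (hf i) _⟩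
  refine ((tendsto_rpow_neg_nhdsGT_zero (neg_neg_of_pos (inv_pos.mpr hs))).comp h₀).congr
    fun i => ?_
  simp [← rpow_mul (hf i).le, hs.ne']

lemma sq_floor_add_half_le (x : ℝ) : ((⌊x⌋ : ℝ) + 1 / 2) ^ 2 ≤ 2 * (1 + x ^ 2) := by
  have h₁ := Int.floor_le x
  have h₂ := Int.lt_floor_add_one x
  nlinarith [sq_nonneg ((⌊x⌋ : ℝ) + 1 / 2 - 2 * x),
    mul_nonneg (sub_nonneg.mpr h₁) (sub_nonneg.mpr h₂.le)]

lemma EisensteinSeries.summable_norm_linear_rpow_neg (z : ℍ) {k : ℝ} (hk : 2 < k) :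
    Summable fun x : Fin 2 → ℤ => ‖(x 0 : ℂ) * z + x 1‖ ^ (-k) :=
  ((summable_one_div_norm_rpow hk).mul_left (r z ^ (-k))).of_nonneg_of_le
    (fun _ => by positivity) (summand_bound z (by linarith))

namespace UpperHalfPlane

lemma one_add_re_sq_div_le_cosh_dist_I (w : ℍ) :
    (1 + w.re ^ 2) / (2 * w.im) ≤ cosh (dist I w) := by
  rw [cosh_dist']
  simp only [I_re, I_im, mul_one]
  exact div_le_div_of_nonneg_right (by nlinarith) (by positivity)

end UpperHalfPlane

namespace ModularGroup

lemma im_smul_I (γ : SL(2, ℤ)) :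
    (γ • I).im = (‖((γ 1 0 : ℤ) : ℂ) * (I : ℂ) + γ 1 1‖ ^ 2)⁻¹ := by
  rw [im_smul_eq_div_normSq, denom_apply, ← Complex.sq_norm]
  simp

lemma exists_eq_T_zpow_mul_of_row_one_eq {γ γ' : SL(2, ℤ)} (h : γ' 1 = γ 1) :
    ∃ k : ℤ, γ' = T ^ k * γ := by
  obtain ⟨x, y, hxy⟩ := bottom_row_coprime γ
  have hc : γ' 1 0 = γ 1 0 := congrFun h 0
  have hd : γ' 1 1 = γ 1 1 := congrFun h 1
  have hdet := γ.det_coe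
  have hdet' := γ'.det_coe
  rw [Matrix.det_fin_two] at hdet hdet'
  rw [hc, hd] at hdet'
  refine ⟨x * (γ' 0 0 - γ 0 0) + y * (γ' 0 1 - γ 0 1), ?_⟩
  ext i j
  fin_cases i <;> fin_cases j <;> simp [coe_T_zpow, Matrix.mul_apply, Fin.sum_univ_two, hc, hd]
  · linear_combination (γ 0 0 - γ' 0 0) * hxy + y * hdet' - y * hdet
  · linear_combination (γ 0 1 - γ' 0 1) * hxy - x * hdet' + x * hdet

lemma injective_row_one_floor_re_smul_I :
    Function.Injective fun γ : SL(2, ℤ) => (γ 1, ⌊(γ • I).re⌋) := by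
  intro γ γ' h
  obtain ⟨hrow, hfloor⟩ := Prod.mk.inj h
  obtain ⟨k, rfl⟩ := exists_eq_T_zpow_mul_of_row_one_eq hrow.symm
  rw [mul_smul, re_T_zpow_smul, Int.floor_add_intCast, left_eq_add] at hfloor
  rw [hfloor, zpow_zero, one_mul]

lemma le_cosh_dist_I_smul_I (γ : SL(2, ℤ)) :
    (‖((γ 1 0 : ℤ) : ℂ) * (I : ℂ) + γ 1 1‖ * |(⌊(γ • I).re⌋ : ℝ) + 1 / 2| / 2) ^ 2 ≤
      cosh (dist I (γ • I)) := by
  refine le_trans ?_ (one_add_re_sq_div_le_cosh_dist_I _)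
  rw [im_smul_I, div_mul_eq_div_div, div_inv_eq_mul, div_pow, mul_pow, sq_abs]
  nlinarith [mul_le_mul_of_nonneg_left (sq_floor_add_half_le (γ • I).re)
    (sq_nonneg ‖((γ 1 0 : ℤ) : ℂ) * (I : ℂ) + γ 1 1‖)]

lemma summable_cosh_dist_I_smul_I_rpow_neg {s : ℝ} (hs : 1 < s) :
    Summable fun γ : SL(2, ℤ) => cosh (dist I (γ • I)) ^ (-s) := by
  have hF : Summable fun p : (Fin 2 → ℤ) × ℤ =>
      2 ^ (2 * s) *
        (‖(p.1 0 : ℂ) * I + p.1 1‖ ^ (-(2 * s)) * (1 / |(p.2 : ℝ) + 1 / 2| ^ (2 * s))) := by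
    have h₁ := EisensteinSeries.summable_norm_linear_rpow_neg I (k := 2 * s) (by linarith)
    have h₂ := (summable_one_div_int_add_rpow (1 / 2) (2 * s)).mpr (by linarith)
    exact (h₁.mul_of_nonneg h₂ (fun _ => by positivity) (fun _ => by positivity)).mul_left _
  refine (hF.comp_injective injective_row_one_floor_re_smul_I).of_nonneg_of_le
    (fun γ => rpow_nonneg (cosh_pos _).le _) fun γ => ?_
  set p := ‖((γ 1 0 : ℤ) : ℂ) * (I : ℂ) + γ 1 1‖
  set n := ⌊(γ • I).re⌋
  have hp : 0 < p := by
    have h : 0 < p ^ 2 := inv_pos.mp (im_smul_I γ ▸ (γ • I).im_pos)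
    exact lt_of_pow_lt_pow_left₀ 2 (norm_nonneg _) (by simpa using h)
  have hq : 0 < |(n : ℝ) + 1 / 2| := abs_pos.mpr fun h => by
    have : (2 * n + 1 : ℤ) = 0 := by exact_mod_cast (by linarith : 2 * (n : ℝ) + 1 = 0)
    omega
  calc cosh (dist I (γ • I)) ^ (-s) ≤ ((p * |(n : ℝ) + 1 / 2| / 2) ^ 2) ^ (-s) :=
        rpow_le_rpow_of_nonpos (by positivity) (le_cosh_dist_I_smul_I γ) (by linarith)
    _ = 2 ^ (2 * s) * (p ^ (-(2 * s)) * (1 / |(n : ℝ) + 1 / 2| ^ (2 * s))) := by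
        rw [rpow_neg (by positivity), ← rpow_natCast, ← rpow_mul (by positivity),
          div_rpow (by positivity) (by norm_num), mul_rpow hp.le hq.le, rpow_neg hp.le]
        push_cast
        field_simp

lemma summable_cosh_dist_smul_rpow_neg {s : ℝ} (hs : 1 < s) (z₁ z₂ : ℍ) :
    Summable fun γ : SL(2, ℤ) => cosh (dist z₁ (γ • z₂)) ^ (-s) := by
  refine ((summable_cosh_dist_I_smul_I_rpow_neg hs).mul_left
    (exp ((dist I z₁ + dist I z₂) * s))).of_nonneg_of_le
    (fun γ => rpow_nonneg (cosh_pos _).le _) fun γ => ?_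
  have hγ : dist (γ • I) (γ • z₂) = dist I z₂ := dist_smul (γ : SL(2, ℝ)) I z₂
  have h := cosh_dist_le_exp_mul_cosh_dist I (γ • I) z₁ (γ • z₂)
  rw [hγ, ← inv_mul_le_iff₀ (exp_pos _), ← exp_neg] at h
  calc cosh (dist z₁ (γ • z₂)) ^ (-s)
      ≤ (exp (-(dist I z₁ + dist I z₂)) * cosh (dist I (γ • I))) ^ (-s) :=
        rpow_le_rpow_of_nonpos (by positivity) h (by linarith)
    _ = exp ((dist I z₁ + dist I z₂) * s) * cosh (dist I (γ • I)) ^ (-s) := by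
        rw [mul_rpow (exp_pos _).le (cosh_pos _).le, ← exp_mul, neg_mul_neg]

end ModularGroup

/-- Let `s > 1` be real and let `z₁, z₂ ∈ ℍ` be such that `γ·z₂ ≠ z₁` for
every `γ ∈ SL(2, ℤ)`.  Then the family `(Q_{s−1}(cosh d(z₁, γ·z₂)))_{γ ∈ SL(2,ℤ)}` is
summable, and its sum is strictly positive.  (Hence the Poincaré series defining
`G_s(z₁, z₂) = −2·∑_γ Q_{s−1}(cosh d(z₁, γ·z₂))` converges absolutely and
`G_s(z₁, z₂) < 0` off the diagonal orbit.) -/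
theorem green_series_summable_pos (s : ℝ) (hs : 1 < s) (z₁ z₂ : ℍ)
    (h : ∀ γ : Matrix.SpecialLinearGroup (Fin 2) ℤ, γ • z₂ ≠ z₁) :
    Summable (fun γ : Matrix.SpecialLinearGroup (Fin 2) ℤ =>
        legendreQ s (Real.cosh (dist z₁ (γ • z₂)))) ∧
    0 < ∑' γ : Matrix.SpecialLinearGroup (Fin 2) ℤ,
        legendreQ s (Real.cosh (dist z₁ (γ • z₂))) := by
  have hs₀ : 0 < s := by linarith
  have hcosh₁ : 1 < cosh (dist z₁ ((1 : SL(2, ℤ)) • z₂)) :=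
    one_lt_cosh.mpr (dist_ne_zero.mpr fun hz => h 1 hz.symm)
  have hsum := ModularGroup.summable_cosh_dist_smul_rpow_neg hs z₁ z₂
  have hQ : Summable fun γ : SL(2, ℤ) => legendreQ s (cosh (dist z₁ (γ • z₂))) :=
    summable_of_isBigO hsum <| (isBigO_legendreQ_atTop hs₀).comp_tendsto <|
      tendsto_cofinite_atTop_of_summable_rpow_neg hs₀ (fun γ => cosh_pos _) hsum
  exact ⟨hQ, hQ.tsum_pos (fun γ => legendreQ_nonneg (cosh_pos _).le) 1 (legendreQ_pos hs₀ hcosh₁)⟩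
end

section
/- Let G be a group and let A₁, A₂ be abelian subgroups of G, each of index at most 2, such that A₁ ∪ A₂ generates G, and such that for each i ∈ {1, 2}, every element g ∈ G with g ∉ A_i satisfies g² = 1 and g·a·g⁻¹ = a⁻¹ for all a ∈ A_i. Then G is abelian. (This is the group-theoretic content of the lemma that the intersection H₀ = H₁ ∩ H₂ of the ring class fields of two distinct imaginary quadratic fields is an abelian extension of ℚ, applied to G = Gal(H₀/ℚ) with A_i = Gal(H₀/K_i): there each Gal(H_i/ℚ) is generalized dihedral over Gal(H_i/K_i), so every element of G outside A_i is an involution inverting A_i.) -/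
/-- Let `G` be a group and let `A₁, A₂` be abelian subgroups of `G`, each
of index at most 2, such that `A₁ ∪ A₂` generates `G`, and such that for each `i ∈ {1, 2}`,
every `g ∈ G` with `g ∉ Aᵢ` satisfies `g² = 1` and `g·a·g⁻¹ = a⁻¹` for all `a ∈ Aᵢ`.
Then `G` is abelian.  (This is the group-theoretic content of the lemma that the
intersection `H₀ = H₁ ∩ H₂` of the ring class fields of two imaginary quadratic fields is
an abelian extension of `ℚ`.) -/
theorem abelian_of_two_dihedral_structures (G : Type*) [Group G] (A₁ A₂ : Subgroup G)
    (hA₁comm : ∀ a ∈ A₁, ∀ b ∈ A₁, a * b = b * a)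
    (hA₂comm : ∀ a ∈ A₂, ∀ b ∈ A₂, a * b = b * a)
    (hA₁idx : A₁.index ≤ 2) (hA₂idx : A₂.index ≤ 2)
    (hgen : Subgroup.closure ((A₁ : Set G) ∪ (A₂ : Set G)) = ⊤)
    (hA₁inv : ∀ g : G, g ∉ A₁ → g ^ 2 = 1 ∧ ∀ a ∈ A₁, g * a * g⁻¹ = a⁻¹)
    (hA₂inv : ∀ g : G, g ∉ A₂ → g ^ 2 = 1 ∧ ∀ a ∈ A₂, g * a * g⁻¹ = a⁻¹) :
    ∀ x y : G, x * y = y * x := by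
  have h12 : ∀ a ∈ A₁, ∀ b ∈ A₂, a * b = b * a := by
    intro a ha b hb
    by_cases ha2 : a ∈ A₂
    · exact hA₂comm a ha2 b hb
    by_cases hb1 : b ∈ A₁
    · exact hA₁comm a ha b hb1
    obtain ⟨hb2, _⟩ := hA₁inv b hb1
    obtain ⟨ha2', hainv⟩ := hA₂inv a ha2
    have h2 : a * b * a⁻¹ = b⁻¹ := hainv b hb
    have hbb : b⁻¹ = b := by
      have : b * b = 1 := by rw [← sq]; exact hb2
      exact inv_eq_of_mul_eq_one_right this
    rw [hbb] at h2
    calc a * b = a * b * a⁻¹ * a := by group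
    _ = b * a := by rw [h2]
  have key : ∀ a ∈ (A₁ : Set G) ∪ (A₂ : Set G), ∀ b ∈ (A₁ : Set G) ∪ (A₂ : Set G),
      a * b = b * a := by
    rintro a (ha | ha) b (hb | hb)
    · exact hA₁comm a ha b hb
    · exact h12 a ha b hb
    · exact (h12 b hb a ha).symm
    · exact hA₂comm a ha b hb
  intro x y
  have hx : x ∈ Subgroup.closure ((A₁ : Set G) ∪ (A₂ : Set G)) := by
    rw [hgen]; trivial
  have hy : y ∈ Subgroup.closure ((A₁ : Set G) ∪ (A₂ : Set G)) := by
    rw [hgen]; trivial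
  induction hx, hy using Subgroup.closure_induction₂ with
  | mem u v hu hv => exact key u hu v hv
  | one_left v hv => group
  | one_right v hv => group
  | mul_left u v w _ _ _ h1 h2 => rw [mul_assoc, h2, ← mul_assoc, h1, mul_assoc]
  | mul_right u v w _ _ _ h1 h2 => rw [← mul_assoc, h1, mul_assoc, h2, ← mul_assoc]
  | inv_left u v _ _ h => exact (Commute.inv_left h : _)
  | inv_right u v _ _ h => exact (Commute.inv_right h : _)
end
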